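/- (Normal form in the proof of Theorem 8.) Let ρ : ℝ² → Sym(2,ℝ) be an injective linear map. Then there exist invertible matrices A, T ∈ GL(2,ℝ) and real numbers a, b such that for all ξ = (ξ₁, ξ₂) ∈ ℝ²: A · ρ(Tξ) · Aᵀ = [[ξ₁, aξ₁ + bξ₂], [aξ₁ + bξ₂, ξ₂]], i.e. the congruence-transformed and linearly reparametrized map has (1,1)-entry ξ₁, (2,2)-entry ξ₂, and off-diagonal entry aξ₁ + bξ₂. -/
import Mathlib

/-!
STATEMENT 18: for any injective linear map ρ : ℝ² → Sym(2,ℝ), there are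
A, T ∈ GL(2,ℝ) and a, b ∈ ℝ with
A ρ(Tξ) Aᵀ = [[ξ₁, aξ₁+bξ₂], [aξ₁+bξ₂, ξ₂]] for all ξ.
-/

open Matrix

/-- quadratic form of a 2×2 matrix, entrywise. -/
def qf18 (S : Matrix (Fin 2) (Fin 2) ℝ) (w : Fin 2 → ℝ) : ℝ :=
  w 0 * (S 0 0 * w 0 + S 0 1 * w 1) + w 1 * (S 1 0 * w 0 + S 1 1 * w 1)

lemma entry18 (A S : Matrix (Fin 2) (Fin 2) ℝ) (i j : Fin 2) :
    (A * S * Aᵀ) i j = A i 0 * (S 0 0 * A j 0 + S 0 1 * A j 1)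
      + A i 1 * (S 1 0 * A j 0 + S 1 1 * A j 1) := by
  simp [Matrix.mul_apply, Fin.sum_univ_two, Matrix.transpose_apply]
  ring

lemma qf18_scale (S : Matrix (Fin 2) (Fin 2) ℝ) (w w' : Fin 2 → ℝ) (c : ℝ)
    (h0 : w' 0 = c * w 0) (h1 : w' 1 = c * w 1) :
    qf18 S w' = c ^ 2 * qf18 S w := by
  simp [qf18, h0, h1]; ring

lemma vec2_eq18 (w : Fin 2 → ℝ) : w = w 0 • ![(1:ℝ),0] + w 1 • ![(0:ℝ),1] := by
  funext i; fin_cases i <;> simp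

open Matrix in
theorem statement18 (ρ : (Fin 2 → ℝ) →ₗ[ℝ] Matrix (Fin 2) (Fin 2) ℝ)
    (hρsym : ∀ ξ, (ρ ξ).IsSymm) (hρinj : Function.Injective ρ) :
    ∃ A T : Matrix (Fin 2) (Fin 2) ℝ, IsUnit A.det ∧ IsUnit T.det ∧
      ∃ a b : ℝ, ∀ ξ : Fin 2 → ℝ,
        A * ρ (T.mulVec ξ) * Aᵀ
          = !![ξ 0, a * ξ 0 + b * ξ 1; a * ξ 0 + b * ξ 1, ξ 1] := by
  set S0 := ρ ![(1:ℝ),0] with hS0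
  set S1 := ρ ![(0:ℝ),1] with hS1
  have hdecomp : ∀ ξ : Fin 2 → ℝ, ρ ξ = ξ 0 • S0 + ξ 1 • S1 := by
    intro ξ
    calc ρ ξ = ρ (ξ 0 • ![(1:ℝ),0] + ξ 1 • ![(0:ℝ),1]) := by rw [← vec2_eq18 ξ]
    _ = ξ 0 • S0 + ξ 1 • S1 := by rw [map_add, LinearMap.map_smul, LinearMap.map_smul]
  -- symmetry facts
  have hsym0 : S0 1 0 = S0 0 1 := (hρsym ![(1:ℝ),0]).apply 0 1
  have hsym1 : S1 1 0 = S1 0 1 := (hρsym ![(0:ℝ),1]).apply 0 1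
  -- key: no nonzero combination has identically vanishing quadratic form
  have hzero : ∀ α β : ℝ, (∀ w, α * qf18 S0 w + β * qf18 S1 w = 0) → α = 0 ∧ β = 0 := by
    intro α β h
    have hN : ρ ![α, β] = α • S0 + β • S1 := by
      rw [hdecomp]; simp
    have hq : ∀ w, qf18 (ρ ![α, β]) w = 0 := by
      intro w
      have hw := h w
      rw [hN]
      simp only [qf18, Matrix.add_apply, Matrix.smul_apply, smul_eq_mul] at *
      linear_combination hw
    have h00 : (ρ ![α, β]) 0 0 = 0 := by have := hq ![1,0]; simpa [qf18] using this
    have h11 : (ρ ![α, β]) 1 1 = 0 := by have := hq ![0,1]; simpa [qf18] using this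
    have hs : (ρ ![α, β]) 1 0 = (ρ ![α, β]) 0 1 := (hρsym ![α, β]).apply 0 1
    have hsum := hq ![1,1]
    simp only [qf18] at hsum
    have h01 : (ρ ![α, β]) 0 1 = 0 := by
      simp only [Matrix.cons_val_zero, Matrix.cons_val_one, Matrix.head_cons] at hsum
      linarith [hsum, h00, h11, hs]
    have hN0 : ρ ![α, β] = 0 := by
      ext i j
      fin_cases i <;> fin_cases j
      · exact h00
      · exact h01
      · exact hs.trans h01
      · exact h11
    have hv : (![α, β] : Fin 2 → ℝ) = 0 := hρinj (by rw [hN0, map_zero])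
    constructor
    · have := congrFun hv 0; simpa using this
    · have := congrFun hv 1; simpa using this
  -- find u, v with independent quadratic values
  have hpair : ∃ u v : Fin 2 → ℝ,
      qf18 S0 u * qf18 S1 v - qf18 S1 u * qf18 S0 v ≠ 0 := by
    by_contra hc
    push_neg at hc
    by_cases hall : ∀ w, qf18 S0 w = 0
    · have := hzero 1 0 (fun w => by simp [hall w])
      exact one_ne_zero this.1
    · push_neg at hall
      obtain ⟨u, hu⟩ := hall
      have := hzero (-(qf18 S1 u)) (qf18 S0 u)
        (fun w => by linear_combination hc u w)
      exact hu this.2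
  obtain ⟨u, v, hκ⟩ := hpair
  set A : Matrix (Fin 2) (Fin 2) ℝ := !![u 0, u 1; v 0, v 1] with hA
  have hAdet : A.det ≠ 0 := by
    rw [hA, Matrix.det_fin_two_of]
    intro hd
    apply hκ
    by_cases hu0 : u 0 = 0
    · by_cases hu1 : u 1 = 0
      · have : qf18 S0 u = 0 := by simp [qf18, hu0, hu1]
        have h1 : qf18 S1 u = 0 := by simp [qf18, hu0, hu1]
        rw [this, h1]; ring
      · -- u 1 ≠ 0, scale c = v 1 / u 1
        have hv0 : v 0 = 0 := by
          have h2 : u 1 * v 0 = 0 := by linear_combination -hd + v 1 * hu0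
          exact (mul_eq_zero.mp h2).resolve_left hu1
        have c0 : v 0 = (v 1 / u 1) * u 0 := by simp [hv0, hu0]
        have c1 : v 1 = (v 1 / u 1) * u 1 := by field_simp
        rw [qf18_scale S0 u v _ c0 c1, qf18_scale S1 u v _ c0 c1]; ring
    · have c0 : v 0 = (v 0 / u 0) * u 0 := by field_simp
      have c1 : v 1 = (v 0 / u 0) * u 1 := by
        field_simp; linear_combination hd
      rw [qf18_scale S0 u v _ c0 c1, qf18_scale S1 u v _ c0 c1]; ring
  -- the matrix of diagonal values and its inverse
  set D : Matrix (Fin 2) (Fin 2) ℝ := !![qf18 S0 u, qf18 S1 u; qf18 S0 v, qf18 S1 v]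
    with hD
  have hDdet : D.det ≠ 0 := by
    rw [hD, Matrix.det_fin_two_of]
    intro h; apply hκ; linear_combination h
  set T : Matrix (Fin 2) (Fin 2) ℝ := D⁻¹ with hT
  have hDT : D * T = 1 := Matrix.mul_nonsing_inv D (isUnit_iff_ne_zero.mpr hDdet)
  have hTdet : IsUnit T.det :=
    Matrix.isUnit_nonsing_inv_det D (isUnit_iff_ne_zero.mpr hDdet)
  have hDT00 : qf18 S0 u * T 0 0 + qf18 S1 u * T 1 0 = 1 := by
    have := congrFun (congrFun hDT 0) 0
    simpa [hD, Matrix.mul_apply, Fin.sum_univ_two, Matrix.one_apply] using this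
  have hDT01 : qf18 S0 u * T 0 1 + qf18 S1 u * T 1 1 = 0 := by
    have := congrFun (congrFun hDT 0) 1
    simpa [hD, Matrix.mul_apply, Fin.sum_univ_two, Matrix.one_apply] using this
  have hDT10 : qf18 S0 v * T 0 0 + qf18 S1 v * T 1 0 = 0 := by
    have := congrFun (congrFun hDT 1) 0
    simpa [hD, Matrix.mul_apply, Fin.sum_univ_two, Matrix.one_apply] using this
  have hDT11 : qf18 S0 v * T 0 1 + qf18 S1 v * T 1 1 = 1 := by
    have := congrFun (congrFun hDT 1) 1
    simpa [hD, Matrix.mul_apply, Fin.sum_univ_two, Matrix.one_apply] using this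
  -- the congruence images of the basis matrices
  set M0 : Matrix (Fin 2) (Fin 2) ℝ := A * S0 * Aᵀ with hM0
  set M1 : Matrix (Fin 2) (Fin 2) ℝ := A * S1 * Aᵀ with hM1
  have hA0 : ∀ k : Fin 2, A 0 k = u k := by
    intro k; fin_cases k <;> simp [hA]
  have hA1 : ∀ k : Fin 2, A 1 k = v k := by
    intro k; fin_cases k <;> simp [hA]
  have hM000 : M0 0 0 = qf18 S0 u := by
    rw [hM0, entry18]; simp only [hA0]; rfl
  have hM011 : M0 1 1 = qf18 S0 v := by
    rw [hM0, entry18]; simp only [hA1]; rfl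
  have hM100 : M1 0 0 = qf18 S1 u := by
    rw [hM1, entry18]; simp only [hA0]; rfl
  have hM111 : M1 1 1 = qf18 S1 v := by
    rw [hM1, entry18]; simp only [hA1]; rfl
  have hM0sym : M0 1 0 = M0 0 1 := by
    rw [hM0, entry18, entry18, hsym0]; ring
  have hM1sym : M1 1 0 = M1 0 1 := by
    rw [hM1, entry18, entry18, hsym1]; ring
  refine ⟨A, T, isUnit_iff_ne_zero.mpr hAdet, hTdet,
    T 0 0 * M0 0 1 + T 1 0 * M1 0 1, T 0 1 * M0 0 1 + T 1 1 * M1 0 1, fun ξ => ?_⟩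
  have hc0 : (T.mulVec ξ) 0 = T 0 0 * ξ 0 + T 0 1 * ξ 1 := by
    simp [Matrix.mulVec, dotProduct, Fin.sum_univ_two]
  have hc1 : (T.mulVec ξ) 1 = T 1 0 * ξ 0 + T 1 1 * ξ 1 := by
    simp [Matrix.mulVec, dotProduct, Fin.sum_univ_two]
  have hg : A * ρ (T.mulVec ξ) * Aᵀ
      = (T.mulVec ξ) 0 • M0 + (T.mulVec ξ) 1 • M1 := by
    rw [hdecomp (T.mulVec ξ), hM0, hM1]
    simp [Matrix.add_mul, Matrix.mul_add, Matrix.smul_mul, Matrix.mul_smul]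
  rw [hg]
  ext i j
  fin_cases i <;> fin_cases j <;>
    simp only [Fin.zero_eta, Fin.mk_one, Fin.isValue, Matrix.add_apply, Matrix.smul_apply,
      smul_eq_mul, Matrix.cons_val', Matrix.cons_val_zero, Matrix.cons_val_one,
      Matrix.head_cons, Matrix.empty_val', Matrix.cons_val_fin_one, Matrix.head_fin_const,
      Matrix.of_apply, hc0, hc1, hM000, hM100, hM011, hM111, hM0sym, hM1sym]
  · linear_combination ξ 0 * hDT00 + ξ 1 * hDT01
  · ring
  · ring
  · linear_combination ξ 0 * hDT10 + ξ 1 * hDT11
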